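/- Let δ be uniform on [−Δ,Δ]^N and θ ∈ ℝ^N with Mag(θ) < ∑ a_i. Since Mag is continuous and every local maximum is global, there exists an open set U ⊆ [−Δ,Δ]^N of positive Lebesgue measure such that Mag(θ + u) > Mag(θ) for all u ∈ U. -/

import Mathlib

/-!
Every local maximum of `Mag a` is global. If `θ` is a local maximum, then so is `0` for each
one-variable rotation `x ↦ ‖T + v e^{ix}‖`, where `v = a i e^{iθ i}` and `T` is the sum of the
other terms; as `‖T + v e^{ix}‖² = ‖T‖² + ‖v‖² + 2 Re(T̄ v e^{ix})`, this forces `T̄ v ≥ 0`, i.e.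
every term points in the direction of the remaining ones, and then the triangle inequality is an
equality. So below the global maximum `∑ a i`, every neighbourhood of `θ` contains a strictly
better point, and the set of improving perturbations in the open cube is open and nonempty.
-/

open MeasureTheory
open scoped ENNReal

noncomputable def Mag {N : ℕ} (a θ : Fin N → ℝ) : ℝ :=
  ‖∑ i, (a i : ℂ) * Complex.exp ((θ i : ℂ) * Complex.I)‖

open Complex ComplexConjugate ComplexOrder Filter Topology

theorem Complex.nonneg_of_isLocalMax_re_mul_exp {c : ℂ}
    (h : IsLocalMax (fun x : ℝ => (c * exp (x * I)).re) 0) : 0 ≤ c := by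
  have hre : ∀ x : ℝ, (c * exp (x * I)).re = c.re * Real.cos x - c.im * Real.sin x := by
    intro x
    simp [exp_mul_I, mul_re, cos_ofReal_re, sin_ofReal_re]
  simp only [IsLocalMax, IsMaxFilter, hre] at h
  have him : c.im = 0 := by
    have hd : HasDerivAt (fun x => c.re * Real.cos x - c.im * Real.sin x)
        (c.re * -Real.sin 0 - c.im * Real.cos 0) 0 :=
      ((Real.hasDerivAt_cos 0).const_mul c.re).sub ((Real.hasDerivAt_sin 0).const_mul c.im)
    simpa using IsLocalMax.hasDerivAt_eq_zero h hd
  obtain ⟨x, hx, hxπ⟩ :=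
    ((h.filter_mono nhdsWithin_le_nhds).and (Ioo_mem_nhdsGT Real.pi_pos)).exists
  have hcos : Real.cos x < 1 := by
    simpa using Real.cos_lt_cos_of_nonneg_of_le_pi le_rfl hxπ.2.le hxπ.1
  simp only [him, Real.cos_zero, Real.sin_zero] at hx
  rw [nonneg_iff]
  exact ⟨by nlinarith, him.symm⟩

theorem Complex.nonneg_conj_mul_of_isLocalMax_norm_add_mul_exp {T v : ℂ}
    (h : IsLocalMax (fun x : ℝ => ‖T + v * exp (x * I)‖) 0) : 0 ≤ conj T * v := by
  have hsq : ∀ x : ℝ, ‖T + v * exp (x * I)‖ ^ 2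
      = ‖T‖ ^ 2 + ‖v‖ ^ 2 + 2 * (conj T * v * exp (x * I)).re := by
    intro x
    rw [← normSq_eq_norm_sq, ← normSq_eq_norm_sq, ← normSq_eq_norm_sq, normSq_add, normSq_mul,
      normSq_eq_norm_sq (exp _), norm_exp_ofReal_mul_I, ← conj_re, map_mul, conj_conj, mul_assoc,
      one_pow, mul_one]
  refine nonneg_of_isLocalMax_re_mul_exp ?_
  filter_upwards [h] with x hx
  have hx2 := pow_le_pow_left₀ (norm_nonneg _) hx 2
  rw [hsq, hsq] at hx2
  linarith

theorem Complex.norm_sum_eq_sum_norm_of_forall_nonneg {ι : Type*} [Fintype ι] (v : ι → ℂ)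
    (h : ∀ i, 0 ≤ conj (∑ j, v j - v i) * v i) : ‖∑ i, v i‖ = ∑ i, ‖v i‖ := by
  set S := ∑ i, v i
  have hle : ∀ i, ((‖v i‖ ^ 2 : ℝ) : ℂ) ≤ conj S * v i := by
    intro i
    have : conj S * v i = conj (S - v i) * v i + ‖v i‖ ^ 2 := by
      rw [map_sub, sub_mul, conj_mul']; ring
    rw [this]; push_cast; exact le_add_of_nonneg_left (h i)
  -- a nonnegative complex number equals its modulus, here `‖S‖ * ‖v i‖`
  have hw : ∀ i, conj S * v i = ((‖S‖ * ‖v i‖ : ℝ) : ℂ) := by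
    intro i
    rw [← norm_of_nonneg' ((zero_le_real.mpr (by positivity)).trans (hle i))]
    simp
  have hsum : ‖S‖ ^ 2 = ‖S‖ * ∑ i, ‖v i‖ := by
    apply ofReal_injective
    rw [ofReal_pow, ← conj_mul', Finset.mul_sum, Finset.mul_sum]
    push_cast
    exact Finset.sum_congr rfl fun i _ => by exact_mod_cast hw i
  rcases eq_or_ne ‖S‖ 0 with hS | hS
  · refine hS.trans (Finset.sum_eq_zero fun i _ => ?_).symm
    have := hle i
    rw [hw i, hS, zero_mul, real_le_real] at this
    nlinarith [norm_nonneg (v i)]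
  · exact mul_left_cancel₀ hS (by rw [← hsum, sq])

theorem mag_add_single {N : ℕ} (a θ : Fin N → ℝ) (i : Fin N) (x : ℝ) :
    Mag a (θ + Pi.single i x) = ‖(∑ j, (a j : ℂ) * exp (θ j * I) - a i * exp (θ i * I))
      + a i * exp (θ i * I) * exp (x * I)‖ := by
  unfold Mag
  congr 1
  have hrest : ∑ j ∈ Finset.univ.erase i,
      (a j : ℂ) * exp (((θ + Pi.single i x : Fin N → ℝ) j : ℝ) * I)
      = ∑ j ∈ Finset.univ.erase i, (a j : ℂ) * exp (θ j * I) :=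
    Finset.sum_congr rfl fun j hj => by
      rw [Pi.add_apply, Pi.single_eq_of_ne (Finset.ne_of_mem_erase hj), add_zero]
  rw [← Finset.add_sum_erase _ _ (Finset.mem_univ i),
    ← Finset.add_sum_erase _ _ (Finset.mem_univ i), hrest, Pi.add_apply, Pi.single_eq_same,
    ofReal_add, add_mul, exp_add]
  ring

theorem mag_eq_sum_of_isLocalMax {N : ℕ} {a θ : Fin N → ℝ} (ha : ∀ i, 0 < a i)
    (h : IsLocalMax (Mag a) θ) : Mag a θ = ∑ i, a i := by
  have hnorm : ∀ i, ‖(a i : ℂ) * exp (θ i * I)‖ = a i := fun i => by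
    rw [norm_mul, norm_exp_ofReal_mul_I, mul_one, norm_real, Real.norm_of_nonneg (ha i).le]
  unfold Mag
  rw [← Finset.sum_congr rfl fun i _ => hnorm i]
  refine norm_sum_eq_sum_norm_of_forall_nonneg _ fun i => ?_
  have hsingle : θ + Pi.single i 0 = θ := by rw [Pi.single_zero, add_zero]
  have hi : IsLocalMax (fun x : ℝ => Mag a (θ + Pi.single i x)) 0 :=
    IsLocalMax.comp_continuous (g := fun x => θ + Pi.single i x) (hsingle ▸ h)
      (continuous_const.add (continuous_single i)).continuousAt
  simp only [mag_add_single] at hi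
  exact nonneg_conj_mul_of_isLocalMax_norm_add_mul_exp hi

theorem continuous_mag {N : ℕ} (a : Fin N → ℝ) : Continuous (Mag a) := by
  unfold Mag
  fun_prop

theorem improving_open_set_in_cube_general {N : ℕ}
    (a : Fin N → ℝ) (ha : ∀ i, 0 < a i) (Δ : ℝ) (hΔ : 0 < Δ)
    (θ : Fin N → ℝ) (hθ : Mag a θ < ∑ i, a i) :
    ∃ U : Set (Fin N → ℝ), IsOpen U ∧
      U ⊆ Set.pi Set.univ (fun _ : Fin N => Set.Icc (-Δ) Δ) ∧
      0 < volume U ∧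
      ∀ u ∈ U, Mag a θ < Mag a (θ + u) := by
  have hnot : ∃ᶠ y in 𝓝 θ, Mag a θ < Mag a y := by
    simpa [IsLocalMax, IsMaxFilter, Filter.not_eventually] using
      mt (mag_eq_sum_of_isLocalMax ha) hθ.ne
  obtain ⟨y, hy, hyθ⟩ := (hnot.and_eventually (Metric.ball_mem_nhds θ hΔ)).exists
  -- `Fin N → ℝ` carries the sup norm, so `ball 0 Δ` is the open cube
  set U := Metric.ball 0 Δ ∩ {u | Mag a θ < Mag a (θ + u)}
  have hU : IsOpen U :=
    Metric.isOpen_ball.inter (isOpen_lt continuous_const ((continuous_mag a).comp (by fun_prop)))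
  have hyU : y - θ ∈ U := ⟨by rwa [mem_ball_zero_iff, ← dist_eq_norm], by simpa using hy⟩
  refine ⟨U, hU, fun u hu j _ => ?_, hU.measure_pos volume ⟨y - θ, hyU⟩, fun u hu => hu.2⟩
  exact abs_le.mp ((norm_le_pi_norm u j).trans (mem_ball_zero_iff.mp hu.1).le)

theorem improving_open_set_in_cube {N : ℕ} (hN : 1 ≤ N)
    (a : Fin N → ℝ) (ha : ∀ i, 0 < a i) (Δ : ℝ) (hΔ : 0 < Δ)
    (θ : Fin N → ℝ) (hθ : Mag a θ < ∑ i, a i) :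
    ∃ U : Set (Fin N → ℝ), IsOpen U ∧
      U ⊆ Set.pi Set.univ (fun _ : Fin N => Set.Icc (-Δ) Δ) ∧
      0 < volume U ∧
      ∀ u ∈ U, Mag a θ < Mag a (θ + u) :=
  improving_open_set_in_cube_general a ha Δ hΔ θ hθ
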